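/- arXiv:1609.07589 — 2 statements merged into one kernel-verified Lean document; each statement's English description precedes it below -/
import Mathlib

section
/- Let K and N be natural numbers with 1 ≤ K ≤ N. Then C(N,K) · (K/N)^K · (1 − K/N)^{N−K} ≥ K^{−K} e^{−K}, where all powers are natural-number powers of real numbers (with the convention 0^0 = 1 when K = N). -/
/-! Since `K! C(N,K) = N (N-1) ⋯ (N-K+1) ≥ (N-K+1)^K`, `K! ≤ K^K` and `(N-K+1) K ≥ N`, the first
two factors are at least `K^{-K}`. Writing `N = K + m`, the last factor is `(1 + K/m)^{-m}`, which
is at least `e^{-K}` because `1 + x ≤ e^x`. -/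

open Nat Real

theorem Nat.pow_le_choose_mul_pow_mul_pow {N K : ℕ} (hKN : K ≤ N) :
    N ^ K ≤ N.choose K * K ^ K * K ^ K := by
  obtain rfl | hK := K.eq_zero_or_pos
  · simp
  have hN : N ≤ (N + 1 - K) * K := by
    rw [show N + 1 - K = N - K + 1 by omega, add_one_mul]
    nlinarith [Nat.sub_add_cancel hKN]
  calc N ^ K ≤ ((N + 1 - K) * K) ^ K := Nat.pow_le_pow_left hN K
    _ = (N + 1 - K) ^ K * K ^ K := Nat.mul_pow ..
    _ ≤ N.descFactorial K * K ^ K := by gcongr; exact Nat.pow_sub_le_descFactorial N K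
    _ = K ! * N.choose K * K ^ K := by rw [Nat.descFactorial_eq_factorial_mul_choose]
    _ ≤ N.choose K * K ^ K * K ^ K := by
      rw [mul_comm (K !)]; gcongr; exact Nat.factorial_le_pow K

theorem inv_pow_le_choose_mul_div_pow {N K : ℕ} (hKN : K ≤ N) :
    ((K : ℝ) ^ K)⁻¹ ≤ N.choose K * ((K : ℝ) / N) ^ K := by
  obtain rfl | hK := K.eq_zero_or_pos
  · simp
  have hN : 0 < N := hK.trans_le hKN
  rw [div_pow, ← mul_div_assoc, le_div_iff₀ (by positivity), inv_mul_le_iff₀ (by positivity),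
    mul_comm]
  exact_mod_cast Nat.pow_le_choose_mul_pow_mul_pow hKN

theorem Real.exp_neg_le_one_sub_div_add_pow {a : ℝ} (ha : 0 ≤ a) (m : ℕ) :
    exp (-a) ≤ (1 - a / (a + m)) ^ m := by
  obtain rfl | hm := m.eq_zero_or_pos
  · simpa using ha
  have hm' : (0 : ℝ) < m := by exact_mod_cast hm
  have h_one_sub : 1 - a / (a + m) = (1 + a / m)⁻¹ := by field_simp; ring
  rw [h_one_sub, inv_pow, exp_neg]
  refine inv_anti₀ (by positivity) ?_
  simpa [neg_div, sub_neg_eq_add] using one_sub_div_pow_le_exp_neg (n := m) (t := -a) (by linarith)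

theorem choose_mul_pow_ge_general (K N : ℕ) (hKN : K ≤ N) :
    (N.choose K : ℝ) * ((K : ℝ) / N) ^ K * (1 - (K : ℝ) / N) ^ (N - K) ≥
      ((K : ℝ) ^ K)⁻¹ * Real.exp (-(K : ℝ)) := by
  obtain ⟨m, rfl⟩ := Nat.exists_eq_add_of_le hKN
  have h_exp := exp_neg_le_one_sub_div_add_pow K.cast_nonneg m
  rw [← Nat.cast_add] at h_exp
  rw [Nat.add_sub_cancel_left]
  exact mul_le_mul (inv_pow_le_choose_mul_div_pow hKN) h_exp (exp_nonneg _) (by positivity)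

/-- For naturals `1 ≤ K ≤ N`,
`C(N,K) (K/N)^K (1 - K/N)^(N-K) ≥ K^(-K) e^(-K)`. -/
theorem choose_mul_pow_ge (K N : ℕ) (hK : 1 ≤ K) (hKN : K ≤ N) :
    (N.choose K : ℝ) * ((K : ℝ) / N) ^ K * (1 - (K : ℝ) / N) ^ (N - K) ≥
      ((K : ℝ) ^ K)⁻¹ * Real.exp (-(K : ℝ)) :=
  choose_mul_pow_ge_general K N hKN
end

section
/- Let K and N be natural numbers with 1 ≤ K ≤ N, let (Ω, 𝒜, μ) be a probability space, and let X₁, …, X_N : Ω → ℝ be mutually independent random variables, each distributed according to the Gamma distribution with shape 3K−2 and rate 1/2 (chi-square with 2(3K−2) degrees of freedom), whose CDF is F(ℓ) = γ(3K−2, ℓ/2)/Γ(3K−2). Define the K-th smallest value L(ω) = inf{ t ∈ ℝ : at least K indices i satisfy X_i(ω) ≤ t }. If K/N ≤ F(2), then the (lower Lebesgue) integral ∫ (1/L) dμ ≥ K^{−K} e^{−K} (C₂ N / K)^{1/(3K−2)}, where C₂ = e^{−1} 2^{−(3K−2)}/Γ(3K−1). In particular, 𝔼[1/L_{Kth-min}]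 = Ω(N^{1/(3K−2)}). -/
/-!
If `K` disjoint blocks of `m = ⌊N/K⌋` indices each contain an index with `X i ≤ t`, then at least
`K` of the `X i` are `≤ t`, so `0 < L ≤ t` (the `X i` are a.s. positive). By independence this
happens with probability `(1 - (1 - F t)^m)^K`, and `F t ≥ K/N` makes `(1 - F t)^m ≤ e^{-1/2}`;
hence `𝔼[1/L] ≥ (1 - e^{-1/2})^K / t`. On `[0, 2]` the density of shape `a = 3K - 2` is at least
`e⁻¹ (1/2)^a x^(a-1) / Γ(a)`, so `F t ≥ C₂ t^a` there, and `t = (K / (C₂ N))^(1/a)` satisfies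
`F t ≥ K/N`; if that `t` exceeds `2`, take `t = 2` and use `K/N ≤ F 2` instead.
Finally `K^(-K) e^(-K) ≤ (1 - e^{-1/2})^K` since `e⁻¹ ≤ 1 - e^{-1/2}`.
-/

open MeasureTheory ProbabilityTheory

noncomputable def lowerGamma (a x : ℝ) : ℝ :=
  ∫ t in (0:ℝ)..x, t ^ (a - 1) * Real.exp (-t)

open Set Real

lemma integral_rpow_mul_exp_neg_mul_eq_lowerGamma {a r t : ℝ} (hr : 0 < r) (ht : 0 ≤ t) :
    ∫ x in (0:ℝ)..t, x ^ (a - 1) * exp (-(r * x)) = lowerGamma a (r * t) / r ^ a := by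
  have hsub := intervalIntegral.integral_comp_mul_left
    (fun y => y ^ (a - 1) * exp (-y)) (a := 0) (b := t) hr.ne'
  have hcongr : EqOn (fun x => (r * x) ^ (a - 1) * exp (-(r * x)))
      (fun x => r ^ (a - 1) * (x ^ (a - 1) * exp (-(r * x)))) (uIcc 0 t) := by
    intro x hx
    rw [uIcc_of_le ht] at hx
    simp only [mul_rpow hr.le hx.1, mul_assoc]
  rw [intervalIntegral.integral_congr hcongr, intervalIntegral.integral_const_mul, mul_zero,
    smul_eq_mul, ← lowerGamma] at hsub
  have hra : r ^ a = r ^ (a - 1) * r := by rw [rpow_sub_one hr.ne', div_mul_cancel₀ _ hr.ne']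
  rw [eq_div_iff (rpow_pos_of_pos hr a).ne', hra, ← mul_assoc, mul_comm _ (r ^ (a - 1)), hsub]
  field_simp

lemma cdf_gammaMeasure_eq_lowerGamma {a r t : ℝ} (ha : 0 < a) (hr : 0 < r) (ht : 0 ≤ t) :
    cdf (gammaMeasure a r) t = lowerGamma a (r * t) / Gamma a := by
  have hpdf : gammaPDFReal a r =
      (Ici 0).indicator fun x => r ^ a / Gamma a * (x ^ (a - 1) * exp (-(r * x))) := by
    ext x
    simp [gammaPDFReal, Set.indicator, mul_assoc]
  rw [cdf_gammaMeasure_eq_integral ha hr, hpdf, setIntegral_indicator measurableSet_Ici,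
    Iic_inter_Ici, integral_Icc_eq_integral_Ioc, ← intervalIntegral.integral_of_le ht,
    intervalIntegral.integral_const_mul, integral_rpow_mul_exp_neg_mul_eq_lowerGamma hr ht]
  field_simp

lemma exp_neg_one_mul_rpow_div_le_lowerGamma {a x : ℝ} (ha : 0 < a) (hx0 : 0 ≤ x) (hx1 : x ≤ 1) :
    exp (-1) * x ^ a / a ≤ lowerGamma a x := by
  have hint : IntervalIntegrable (fun t : ℝ => t ^ (a - 1)) volume 0 x :=
    intervalIntegral.intervalIntegrable_rpow' (by linarith)
  calc exp (-1) * x ^ a / a = ∫ t in (0:ℝ)..x, exp (-1) * t ^ (a - 1) := by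
        rw [intervalIntegral.integral_const_mul, integral_rpow (Or.inl (by linarith)),
          sub_add_cancel, zero_rpow ha.ne', sub_zero, mul_div_assoc]
    _ ≤ lowerGamma a x := by
        refine intervalIntegral.integral_mono_on hx0 (hint.const_mul _)
          (hint.mul_continuousOn (by fun_prop)) fun t ht => ?_
        rw [mul_comm]
        gcongr
        · exact rpow_nonneg ht.1 _
        · linarith [ht.2]

lemma exp_neg_one_mul_rpow_div_le_cdf_gammaMeasure {a r t : ℝ} (ha : 0 < a) (hr : 0 < r)
    (ht0 : 0 ≤ t) (ht : r * t ≤ 1) :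
    exp (-1) * (r * t) ^ a / Gamma (a + 1) ≤ cdf (gammaMeasure a r) t := by
  rw [cdf_gammaMeasure_eq_lowerGamma ha hr ht0, Gamma_add_one ha.ne', ← div_div]
  exact div_le_div_of_nonneg_right
    (exp_neg_one_mul_rpow_div_le_lowerGamma ha (by positivity) ht) (Gamma_pos_of_pos ha).le

lemma exists_le_cdf_gammaMeasure {a r p : ℝ} (ha : 0 < a) (hr : 0 < r) (hp : 0 < p)
    (hpr : p ≤ cdf (gammaMeasure a r) r⁻¹) :
    ∃ t > 0, p ≤ cdf (gammaMeasure a r) t ∧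
      (exp (-1) * r ^ a / Gamma (a + 1) / p) ^ (1 / a) ≤ 1 / t := by
  set C := exp (-1) * r ^ a / Gamma (a + 1)
  have hC : 0 < C := by have := Gamma_pos_of_pos (by linarith : 0 < a + 1); positivity
  set s := (p / C) ^ (1 / a)
  have hs : 0 < s := by positivity
  have hCp : (C / p) ^ (1 / a) = 1 / s := by
    rw [← inv_div, inv_rpow (by positivity)]
    exact (one_div s).symm
  by_cases hsr : s ≤ r⁻¹
  · refine ⟨s, hs, ?_, hCp.le⟩
    have hsa : s ^ a = p / C := by
      rw [← rpow_mul (by positivity), one_div_mul_cancel ha.ne', rpow_one]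
    calc p = C * s ^ a := by rw [hsa]; field_simp
      _ = exp (-1) * (r * s) ^ a / Gamma (a + 1) := by
          rw [mul_rpow hr.le hs.le]; ring
      _ ≤ cdf (gammaMeasure a r) s :=
          exp_neg_one_mul_rpow_div_le_cdf_gammaMeasure ha hr hs.le
            (by simpa [mul_inv_cancel₀ hr.ne'] using mul_le_mul_of_nonneg_left hsr hr.le)
  · refine ⟨r⁻¹, inv_pos.2 hr, hpr, ?_⟩
    rw [hCp, one_div, one_div, inv_inv]
    exact inv_le_of_inv_le₀ hr (not_le.1 hsr).le

lemma ae_pos_gammaMeasure {a r : ℝ} (ha : 0 < a) (hr : 0 < r) : ∀ᵐ x ∂gammaMeasure a r, 0 < x := by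
  have := isProbabilityMeasure_gammaMeasure ha hr
  rw [ae_iff]
  simp only [not_lt]
  change gammaMeasure a r (Iic 0) = 0
  rw [← ofReal_cdf, cdf_gammaMeasure_eq_lowerGamma ha hr le_rfl, mul_zero, lowerGamma,
    intervalIntegral.integral_same, zero_div, ENNReal.ofReal_zero]

lemma ProbabilityTheory.iIndepFun.curry {ι κ Ω β : Type*} {_ : MeasurableSpace Ω} {μ : Measure Ω}
    [MeasurableSpace β] {X : ι × κ → Ω → β} (hX : ∀ p, Measurable (X p)) (h : iIndepFun X μ) :
    iIndepFun (fun i ω j => X (i, j) ω) μ := by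
  have := h.isProbabilityMeasure
  have _ p := Measure.isProbabilityMeasure_map (μ := μ) (hX p).aemeasurable
  rw [iIndepFun_iff_map_fun_eq_infinitePi_map (fun i => measurable_pi_lambda _ fun j => hX _)]
  have hblock i : μ.map (fun ω j => X (i, j) ω) = Measure.infinitePi fun j => μ.map (X (i, j)) :=
    (h.precomp (Prod.mk_right_injective i)).map_fun_eq_infinitePi_map fun j => hX _
  simp_rw [hblock]
  rw [← Measure.infinitePi_map_curry (fun i j => μ.map (X (i, j))),
    ← h.map_fun_eq_infinitePi_map hX, Measure.map_map (by fun_prop) (measurable_pi_lambda _ hX)]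
  rfl

lemma ProbabilityTheory.iIndepFun.measure_iInter_iUnion_preimage {ι κ Ω β : Type*} [Fintype ι]
    [Fintype κ] {_ : MeasurableSpace Ω} {μ : Measure Ω} [MeasurableSpace β] {X : ι × κ → Ω → β}
    {ν : Measure β} (hX : ∀ p, Measurable (X p)) (h : iIndepFun X μ)
    (hν : ∀ p, μ.map (X p) = ν) {s : Set β} (hs : MeasurableSet s) :
    μ (⋂ i, ⋃ j, X (i, j) ⁻¹' s) = (1 - ν sᶜ ^ Fintype.card κ) ^ Fintype.card ι := by
  have := h.isProbabilityMeasure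
  have hblock i : μ (⋃ j, X (i, j) ⁻¹' s) = 1 - ν sᶜ ^ Fintype.card κ := by
    rw [← compl_compl (⋃ j, _), compl_iUnion]
    simp_rw [← preimage_compl]
    rw [prob_compl_eq_one_sub (.iInter fun j => hX _ hs.compl),
      (h.precomp (Prod.mk_right_injective i)).meas_iInter fun j => ⟨_, hs.compl, rfl⟩]
    simp_rw [← Measure.map_apply (hX _) hs.compl, hν, Finset.prod_const, Finset.card_univ]
  rw [(h.curry hX).meas_iInter (s := fun i => ⋃ j, X (i, j) ⁻¹' s)
    fun i => ⟨⋃ j, (fun z => z j) ⁻¹' s, .iUnion fun j => measurable_pi_apply j hs,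
      by ext; simp⟩]
  simp_rw [hblock, Finset.prod_const, Finset.card_univ]

open Finset in
lemma Finset.card_le_card_filter_of_forall_exists {ι κ α : Type*} [Fintype ι] [Fintype α]
    (e : ι × κ ↪ α) (p : α → Prop) [DecidablePred p] (h : ∀ i, ∃ j, p (e (i, j))) :
    Fintype.card ι ≤ #{a | p a} := by
  choose j hj using h
  exact card_le_card_of_injOn (fun i => e (i, j i)) (fun i _ => by simpa using hj i)
    fun i _ i' _ hii' => congrArg Prod.fst (e.injective hii')

section kthSmallest

open Finset

variable {ι : Type*} [Fintype ι]

noncomputable def kthSmallest (K : ℕ) (x : ι → ℝ) : ℝ :=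
  sInf {t | K ≤ #{i | x i ≤ t}}

variable {K : ℕ} {x : ι → ℝ} {t : ℝ}

lemma iInf_le_of_le_card_filter (hK : 1 ≤ K) (ht : K ≤ #{i | x i ≤ t}) : ⨅ i, x i ≤ t := by
  obtain ⟨i, hi⟩ := card_pos.1 (hK.trans ht)
  exact (ciInf_le (Set.finite_range x).bddBelow i).trans (mem_filter.1 hi).2

lemma kthSmallest_le (hK : 1 ≤ K) (ht : K ≤ #{i | x i ≤ t}) : kthSmallest K x ≤ t :=
  csInf_le ⟨⨅ i, x i, fun _ hs => iInf_le_of_le_card_filter hK hs⟩ ht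

lemma iInf_le_kthSmallest (hK : 1 ≤ K) (ht : K ≤ #{i | x i ≤ t}) : ⨅ i, x i ≤ kthSmallest K x :=
  le_csInf ⟨t, ht⟩ fun _ hs => iInf_le_of_le_card_filter hK hs

lemma one_div_le_one_div_kthSmallest (hK : 1 ≤ K) (hx : ∀ i, 0 < x i)
    (ht : K ≤ #{i | x i ≤ t}) : 1 / t ≤ 1 / kthSmallest K x := by
  obtain ⟨i, -⟩ := card_pos.1 (hK.trans ht)
  have : Nonempty ι := ⟨i⟩
  obtain ⟨i₀, hi₀⟩ := exists_eq_ciInf_of_finite (f := x)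
  exact one_div_le_one_div_of_le ((hx i₀).trans_le (hi₀ ▸ iInf_le_kthSmallest hK ht))
    (kthSmallest_le hK ht)

end kthSmallest

open Finset in
lemma ofReal_mul_le_lintegral_one_div_kthSmallest {α Ω : Type*} [Fintype α]
    {_ : MeasurableSpace Ω} {μ : Measure Ω} {X : α → Ω → ℝ} {ν : Measure ℝ}
    (hX : ∀ i, Measurable (X i)) (h : iIndepFun X μ) (hν : ∀ i, μ.map (X i) = ν)
    (hpos : ∀ᵐ x ∂ν, 0 < x) {K m : ℕ} (hK : 1 ≤ K) (hKm : K * m ≤ Fintype.card α) (t : ℝ) :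
    ENNReal.ofReal (1 / t) * (1 - ν (Ioi t) ^ m) ^ K ≤
      ∫⁻ ω, ENNReal.ofReal (1 / kthSmallest K fun i => X i ω) ∂μ := by
  obtain ⟨e⟩ : Nonempty (Fin K × Fin m ↪ α) :=
    Function.Embedding.nonempty_of_card_le (by simpa using hKm)
  set E := ⋂ k, ⋃ j, X (e (k, j)) ⁻¹' Iic t
  have hE : MeasurableSet E := .iInter fun k => .iUnion fun j => hX _ measurableSet_Iic
  have hμE : μ E = (1 - ν (Ioi t) ^ m) ^ K := by
    simpa using (h.precomp e.injective).measure_iInter_iUnion_preimage (fun p => hX _)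
      (fun p => hν _) measurableSet_Iic
  have hXpos : ∀ᵐ ω ∂μ, ∀ i, 0 < X i ω :=
    ae_all_iff.2 fun i => ae_of_ae_map (hX i).aemeasurable ((hν i).symm ▸ hpos)
  have hcount ω (hω : ω ∈ E) : K ≤ #{i | X i ω ≤ t} := by
    simpa using card_le_card_filter_of_forall_exists e (fun i => X i ω ≤ t)
      (by simpa [E] using hω)
  calc ENNReal.ofReal (1 / t) * (1 - ν (Ioi t) ^ m) ^ K = ∫⁻ _ in E, ENNReal.ofReal (1 / t) ∂μ := by
        rw [setLIntegral_const, hμE]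
    _ ≤ ∫⁻ ω in E, ENNReal.ofReal (1 / kthSmallest K fun i => X i ω) ∂μ := by
        refine setLIntegral_mono_ae' hE (hXpos.mono fun ω hω hωE => ?_)
        exact ENNReal.ofReal_le_ofReal (one_div_le_one_div_kthSmallest hK hω (hcount ω hωE))
    _ ≤ _ := setLIntegral_le_lintegral _ _

lemma exp_neg_one_le_one_sub_exp_neg_half : exp (-1) ≤ 1 - exp (-(1 / 2)) := by
  -- with `u = e^{-1/2}` the claim reads `u² + u ≤ 1`, which follows from `u² = e⁻¹ < 0.368`
  have hsq : exp (-(1 / 2)) ^ 2 = exp (-1) := by rw [← exp_nat_mul]; norm_num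
  have he : exp (-1) < 0.368 := by
    rw [exp_neg, inv_lt_comm₀ (exp_pos 1) (by norm_num)]
    linarith [exp_one_gt_d9]
  nlinarith [exp_pos (-(1 / 2))]

lemma inv_pow_self_mul_exp_neg_le (K : ℕ) :
    ((K : ℝ) ^ K)⁻¹ * exp (-K) ≤ (1 - exp (-(1 / 2))) ^ K := by
  have hKK : 1 ≤ (K : ℝ) ^ K := by
    rcases K.eq_zero_or_pos with rfl | hK
    · simp
    · exact one_le_pow₀ (by exact_mod_cast hK)
  calc ((K : ℝ) ^ K)⁻¹ * exp (-K) ≤ exp (-1) ^ K := by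
        rw [← exp_nat_mul, mul_neg_one]
        exact mul_le_of_le_one_left (exp_pos _).le (inv_le_one_of_one_le₀ hKK)
    _ ≤ (1 - exp (-(1 / 2))) ^ K :=
        pow_le_pow_left₀ (exp_pos _).le exp_neg_one_le_one_sub_exp_neg_half K

lemma one_sub_div_pow_div_le_exp_neg_half {K N : ℕ} (hK : 1 ≤ K) (hKN : K ≤ N) :
    (1 - K / N : ℝ) ^ (N / K) ≤ exp (-(1 / 2)) := by
  have hN : (0 : ℝ) < N := by exact_mod_cast hK.trans hKN
  have hblock : N ≤ 2 * (N / K * K) := by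
    have := Nat.div_add_mod N K
    have := Nat.mod_lt N hK
    have := Nat.mul_le_mul_right K ((Nat.one_le_div_iff hK).2 hKN)
    nlinarith
  have hhalf : 1 / 2 ≤ (N / K : ℕ) * (K / N : ℝ) := by
    rw [mul_div_assoc', le_div_iff₀ hN]
    have : (N : ℝ) ≤ 2 * ((N / K : ℕ) * K) := by exact_mod_cast hblock
    linarith
  calc (1 - K / N : ℝ) ^ (N / K) ≤ exp (-(K / N)) ^ (N / K) := by
        refine pow_le_pow_left₀ ?_ (one_sub_le_exp_neg _) _
        rw [sub_nonneg, div_le_one hN]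
        exact_mod_cast hKN
    _ = exp (-((N / K : ℕ) * (K / N : ℝ))) := by rw [← exp_nat_mul]; ring_nf
    _ ≤ exp (-(1 / 2)) := exp_le_exp.2 (neg_le_neg hhalf)

lemma ofReal_one_sub_exp_neg_half_le {ν : Measure ℝ} [IsProbabilityMeasure ν] {K N : ℕ}
    (hK : 1 ≤ K) (hKN : K ≤ N) {t : ℝ} (ht : K / N ≤ cdf ν t) :
    ENNReal.ofReal (1 - exp (-(1 / 2))) ≤ 1 - ν (Ioi t) ^ (N / K) := by
  have hq : ν (Ioi t) ≤ ENNReal.ofReal (1 - K / N) := by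
    rw [← compl_Iic, prob_compl_eq_one_sub measurableSet_Iic, ← ofReal_cdf, ← ENNReal.ofReal_one,
      ← ENNReal.ofReal_sub _ (cdf_nonneg _ _)]
    exact ENNReal.ofReal_le_ofReal (by linarith)
  have hqm : ν (Ioi t) ^ (N / K) ≤ ENNReal.ofReal (exp (-(1 / 2))) := by
    refine (pow_le_pow_left' hq _).trans ?_
    rw [← ENNReal.ofReal_pow]
    · exact ENNReal.ofReal_le_ofReal (one_sub_div_pow_div_le_exp_neg_half hK hKN)
    · rw [sub_nonneg, div_le_one (by exact_mod_cast hK.trans hKN : (0 : ℝ) < N)]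
      exact_mod_cast hKN
  rw [ENNReal.ofReal_sub _ (exp_pos _).le, ENNReal.ofReal_one]
  exact tsub_le_tsub_left hqm 1

/-- Theorem 2 of the paper: let `X₁, …, X_N` be mutually independent, each
chi-square with `2(3K-2)` degrees of freedom (i.e. Gamma with shape `3K-2` and
rate `1/2`), and let `L(ω)` be the `K`-th smallest value among the `X_i(ω)`.
If `K/N ≤ F(2)`, where `F(ℓ) = γ(3K-2, ℓ/2)/Γ(3K-2)` is the common CDF, then
`𝔼[1/L] ≥ K^(-K) e^(-K) (C₂ N / K)^(1/(3K-2))` with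
`C₂ = e⁻¹ 2^(-(3K-2))/Γ(3K-1)`; in particular
`𝔼[1/L_{Kth-min}] = Ω(N^(1/(3K-2)))`. -/
theorem TIL_decay_rate (Ω : Type*) [MeasurableSpace Ω]
    (μ : Measure Ω) [IsProbabilityMeasure μ]
    (K N : ℕ) (hK : 1 ≤ K) (hKN : K ≤ N)
    (X : Fin N → Ω → ℝ) (hmeas : ∀ i, Measurable (X i))
    (hindep : iIndepFun X μ)
    (hdist : ∀ i, μ.map (X i) = gammaMeasure (3 * (K : ℝ) - 2) (1 / 2))
    (hF : (K : ℝ) / N ≤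
      lowerGamma (3 * (K : ℝ) - 2) (2 / 2) / Real.Gamma (3 * (K : ℝ) - 2)) :
    ∫⁻ ω, ENNReal.ofReal
        (1 / sInf {t : ℝ | K ≤ (Finset.univ.filter fun i => X i ω ≤ t).card}) ∂μ ≥
      ENNReal.ofReal (((K : ℝ) ^ K)⁻¹ * Real.exp (-(K : ℝ)) *
        ((Real.exp (-1) / ((2 : ℝ) ^ (3 * K - 2) * Real.Gamma (3 * (K : ℝ) - 1)))
            * N / K) ^ ((1 : ℝ) / (3 * (K : ℝ) - 2))) := by
  set a : ℝ := 3 * (K : ℝ) - 2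
  have hK' : (1 : ℝ) ≤ K := by exact_mod_cast hK
  have ha : 0 < a := by linarith
  have := isProbabilityMeasure_gammaMeasure ha one_half_pos
  have hp : (0 : ℝ) < K / N := div_pos (by positivity) (by exact_mod_cast hK.trans hKN)
  have hε : 0 ≤ 1 - exp (-(1 / 2)) := (exp_pos _).le.trans exp_neg_one_le_one_sub_exp_neg_half
  obtain ⟨t₀, ht₀, hcdf, hroot⟩ := exists_le_cdf_gammaMeasure ha one_half_pos hp <| by
    rwa [cdf_gammaMeasure_eq_lowerGamma ha one_half_pos (by norm_num),
      mul_inv_cancel₀ one_half_pos.ne', ← div_self two_ne_zero]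
  have hC : exp (-1) * (1 / 2) ^ a / Gamma (a + 1) / (K / N) =
      exp (-1) / ((2 : ℝ) ^ (3 * K - 2) * Gamma (3 * (K : ℝ) - 1)) * N / K := by
    have h2 : ((2 : ℝ) ^ (3 * K - 2)) = 2 ^ a := by
      rw [← rpow_natCast, Nat.cast_sub (by omega)]
      push_cast
      rfl
    rw [h2, one_div, inv_rpow zero_le_two, show a + 1 = 3 * (K : ℝ) - 1 by ring]
    field_simp
  rw [← hC, ge_iff_le]
  calc _ ≤ ENNReal.ofReal ((1 - exp (-(1 / 2))) ^ K * (1 / t₀)) :=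
        ENNReal.ofReal_le_ofReal <| mul_le_mul (inv_pow_self_mul_exp_neg_le K) hroot
          (by positivity) (pow_nonneg hε _)
    _ = ENNReal.ofReal (1 / t₀) * ENNReal.ofReal (1 - exp (-(1 / 2))) ^ K := by
        rw [mul_comm, ENNReal.ofReal_mul (by positivity), ENNReal.ofReal_pow hε]
    _ ≤ ENNReal.ofReal (1 / t₀) * (1 - gammaMeasure a (1 / 2) (Ioi t₀) ^ (N / K)) ^ K := by
        gcongr
        exact ofReal_one_sub_exp_neg_half_le hK hKN hcdf
    _ ≤ _ := ofReal_mul_le_lintegral_one_div_kthSmallest hmeas hindep hdist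
        (ae_pos_gammaMeasure ha one_half_pos) hK (by simpa using Nat.mul_div_le N K) t₀
end
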